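/- Let (K, |·|) be a spherically complete nonarchimedean valued field. Then every finite-dimensional K-vector space E equipped with an ultrametric vector seminorm p admits a p-orthogonal basis, i.e. a basis (e_1, …, e_n) such that for every choice of scalars s_1, …, s_n ∈ K, p(s_1•e_1 + ⋯ + s_n•e_n) = max_{1 ≤ i ≤ n} p(s_i•e_i). -/

import Mathlib

/-!
Over a spherically complete field every finitely generated subspace `F` is proximinal: each `x`
has a nearest point in `F`. For `K ∙ y ⊔ F` one minimises the quotient seminorm
`z ↦ p (z - A z)` of `F` along the line `t ↦ x - t • y`; its sublevel sets are closed balls of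
`K` forming a chain, and a common point is a minimiser. If `a` is a nearest point of `x ∉ F` in
`F`, then `x - a` is orthogonal to `F`, so Gram–Schmidt orthogonalisation goes through.
-/

/-- A closed ball of a valued field `(K, v)`: a set of the form `{x | v (x - c) ≤ r}`
with `r ≥ 0`. -/
def IsClosedBall {K : Type*} [Field K] (v : AbsoluteValue K ℝ) (s : Set K) : Prop :=
  ∃ (c : K) (r : ℝ), 0 ≤ r ∧ s = {x : K | v (x - c) ≤ r}

/-- A valued field `(K, v)` is spherically complete if every chain of closed balls
has nonempty intersection. -/
def SphericallyComplete {K : Type*} [Field K] (v : AbsoluteValue K ℝ) : Prop :=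
  ∀ B : Set (Set K), (∀ b ∈ B, IsClosedBall v b) → IsChain (· ⊆ ·) B → (⋂₀ B).Nonempty

open Submodule Set

section

variable {K : Type*} [Field K] {v : AbsoluteValue K ℝ}
variable {E : Type*} [AddCommGroup E] [Module K E]

structure IsUltrametricSeminorm (v : AbsoluteValue K ℝ) (p : E → ℝ) : Prop where
  map_smul : ∀ (c : K) (x : E), p (c • x) = v c * p x
  map_add_le_max : ∀ x y : E, p (x + y) ≤ max (p x) (p y)

namespace IsUltrametricSeminorm

variable {p : E → ℝ}

theorem map_zero (hp : IsUltrametricSeminorm v p) : p 0 = 0 := by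
  simpa using hp.map_smul 0 0

theorem map_neg (hp : IsUltrametricSeminorm v p) (x : E) : p (-x) = p x := by
  simpa using hp.map_smul (-1) x

theorem map_sub_le_max (hp : IsUltrametricSeminorm v p) (x y : E) :
    p (x - y) ≤ max (p x) (p y) := by
  simpa [sub_eq_add_neg, hp.map_neg] using hp.map_add_le_max x (-y)

theorem nonneg (hp : IsUltrametricSeminorm v p) (x : E) : 0 ≤ p x := by
  simpa [hp.map_zero] using hp.map_sub_le_max x x

theorem map_sum_le (hp : IsUltrametricSeminorm v p) {ι : Type*} (s : Finset ι) (g : ι → E)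
    {M : ℝ} (hM : 0 ≤ M) (h : ∀ i ∈ s, p (g i) ≤ M) : p (∑ i ∈ s, g i) ≤ M :=
  Finset.sum_induction g (p · ≤ M)
    (fun _ _ ha hb => (hp.map_add_le_max _ _).trans (max_le ha hb)) (hp.map_zero.trans_le hM) h

end IsUltrametricSeminorm

theorem Submodule.span_singleton_sub_sup {R M : Type*} [Ring R] [AddCommGroup M] [Module R M]
    {F : Submodule R M} {a : M} (ha : a ∈ F) (x : M) : R ∙ (x - a) ⊔ F = R ∙ x ⊔ F := by
  have key : ∀ y b, b ∈ F → R ∙ (y - b) ⊔ F ≤ R ∙ y ⊔ F := fun y b hb =>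
    sup_le ((span_singleton_le_iff_mem _ _).mpr
      (sub_mem (mem_sup_left (mem_span_singleton_self y)) (mem_sup_right hb))) le_sup_right
  exact le_antisymm (key x a ha) (by simpa using key (x - a) (-a) (neg_mem ha))

theorem SphericallyComplete.exists_forall_le (hsc : SphericallyComplete v) {f : K → ℝ}
    (hf : BddBelow (range f)) (hball : ∀ r, ⨅ t, f t < r → IsClosedBall v {t | f t ≤ r}) :
    ∃ t, ∀ s, f t ≤ f s := by
  set B : Set (Set K) := {S | ∃ r, ⨅ t, f t < r ∧ S = {t | f t ≤ r}}
  have hchain : IsChain (· ⊆ ·) B := by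
    rintro _ ⟨r₁, -, rfl⟩ _ ⟨r₂, -, rfl⟩ -
    rcases le_total r₁ r₂ with h | h
    · exact Or.inl fun t ht => le_trans ht h
    · exact Or.inr fun t ht => le_trans ht h
  obtain ⟨t, ht⟩ := hsc B (by rintro _ ⟨r, hr, rfl⟩; exact hball r hr) hchain
  exact ⟨t, fun s => (le_of_forall_gt_imp_ge_of_dense fun r hr => ht _ ⟨r, hr, rfl⟩).trans
    (ciInf_le hf s)⟩

namespace IsUltrametricSeminorm

variable {p : E → ℝ}

theorem setOf_sub_smul_le (hp : IsUltrametricSeminorm v p) {x y : E} (hy : 0 < p y) {t₀ : K}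
    {r : ℝ} (ht₀ : p (x - t₀ • y) ≤ r) :
    {t : K | p (x - t • y) ≤ r} = {t | v (t - t₀) ≤ r / p y} := by
  ext t
  simp only [mem_ofPred_eq]
  rw [le_div_iff₀ hy, ← hp.map_smul, sub_smul]
  constructor
  · intro ht
    calc p (t • y - t₀ • y) = p ((x - t₀ • y) - (x - t • y)) := by congr 1; abel
      _ ≤ r := (hp.map_sub_le_max _ _).trans (max_le ht₀ ht)
  · intro ht
    calc p (x - t • y) = p ((x - t₀ • y) - (t • y - t₀ • y)) := by congr 1; abel
      _ ≤ r := (hp.map_sub_le_max _ _).trans (max_le ht₀ ht)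

theorem exists_forall_le_sub_smul (hsc : SphericallyComplete v) (hp : IsUltrametricSeminorm v p)
    (x y : E) : ∃ t : K, ∀ s : K, p (x - t • y) ≤ p (x - s • y) := by
  rcases (hp.nonneg y).eq_or_lt with hy | hy
  · refine ⟨0, fun s => ?_⟩
    calc p (x - (0 : K) • y) = p ((x - s • y) + s • y) := by simp
      _ ≤ p (x - s • y) := (hp.map_add_le_max _ _).trans <| by
        rw [hp.map_smul, ← hy, mul_zero]
        exact max_le le_rfl (hp.nonneg _)
  · refine hsc.exists_forall_le (f := fun t => p (x - t • y)) ⟨0, ?_⟩ fun r hr => ?_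
    · rintro _ ⟨t, rfl⟩
      exact hp.nonneg _
    · obtain ⟨t₀, ht₀⟩ := exists_lt_of_ciInf_lt hr
      rw [hp.setOf_sub_smul_le hy ht₀.le]
      exact ⟨t₀, r / p y, div_nonneg ((hp.nonneg _).trans ht₀.le) hy.le, rfl⟩

/-- The quotient seminorm of `p` on `E ⧸ F`, pulled back to `E`. -/
theorem sub_nearest (hp : IsUltrametricSeminorm v p) {F : Submodule K E} {A : E → E}
    (hA : ∀ z, A z ∈ F) (hmin : ∀ z, ∀ b ∈ F, p (z - A z) ≤ p (z - b)) :
    IsUltrametricSeminorm v fun z => p (z - A z) := by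
  have hle : ∀ (c : K) z, p (c • z - A (c • z)) ≤ v c * p (z - A z) := fun c z =>
    (hmin (c • z) _ (smul_mem _ c (hA z))).trans_eq (by rw [← smul_sub, hp.map_smul])
  refine ⟨fun c z => (hle c z).antisymm ?_, fun z w => ?_⟩
  · rcases eq_or_ne c 0 with rfl | hc
    · simpa using hp.nonneg _
    · calc v c * p (z - A z) = v c * p (c⁻¹ • c • z - A (c⁻¹ • c • z)) := by
            rw [inv_smul_smul₀ hc]
        _ ≤ v c * (v c⁻¹ * p (c • z - A (c • z))) := by gcongr; exact hle _ _
        _ = p (c • z - A (c • z)) := by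
            rw [← mul_assoc, ← map_mul, mul_inv_cancel₀ hc, map_one, one_mul]
  · calc p (z + w - A (z + w)) ≤ p (z + w - (A z + A w)) := hmin _ _ (add_mem (hA z) (hA w))
      _ = p ((z - A z) + (w - A w)) := by congr 1; abel
      _ ≤ _ := hp.map_add_le_max _ _

theorem le_smul_add_of_nearest (hp : IsUltrametricSeminorm v p) {F : Submodule K E} {x a : E}
    (ha : a ∈ F) (hmin : ∀ b ∈ F, p (x - a) ≤ p (x - b)) (c : K) {w : E} (hw : w ∈ F) :
    p (c • (x - a)) ≤ p (c • (x - a) + w) := by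
  rcases eq_or_ne c 0 with rfl | hc
  · simpa [hp.map_zero] using hp.nonneg w
  · calc p (c • (x - a)) = v c * p (x - a) := hp.map_smul _ _
      _ ≤ v c * p (x - (a - c⁻¹ • w)) := by
          gcongr
          exact hmin _ (sub_mem ha (smul_mem _ _ hw))
      _ = p (c • (x - a) + w) := by
          rw [← hp.map_smul]
          congr 1
          simp only [smul_sub, smul_inv_smul₀ hc]
          abel

end IsUltrametricSeminorm

def IsProximinal (p : E → ℝ) (F : Submodule K E) : Prop :=
  ∀ x, ∃ a ∈ F, ∀ b ∈ F, p (x - a) ≤ p (x - b)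

namespace IsProximinal

variable {p : E → ℝ}

theorem bot : IsProximinal p (⊥ : Submodule K E) := fun _ =>
  ⟨0, zero_mem _, fun b hb => by rw [(mem_bot K).mp hb]⟩

theorem sup_span_singleton (hsc : SphericallyComplete v) (hp : IsUltrametricSeminorm v p)
    {F : Submodule K E} (hF : IsProximinal p F) (y : E) : IsProximinal p (K ∙ y ⊔ F) := by
  choose A hA hmin using hF
  intro x
  obtain ⟨t, ht⟩ := (hp.sub_nearest hA hmin).exists_forall_le_sub_smul hsc x y
  refine ⟨t • y + A (x - t • y),
    add_mem (mem_sup_left (smul_mem _ t (mem_span_singleton_self y))) (mem_sup_right (hA _)),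
    fun b hb => ?_⟩
  obtain ⟨_, hu, w, hw, rfl⟩ := mem_sup.mp hb
  obtain ⟨s, rfl⟩ := mem_span_singleton.mp hu
  calc p (x - (t • y + A (x - t • y))) = p (x - t • y - A (x - t • y)) := by
        rw [sub_add_eq_sub_sub]
    _ ≤ p (x - s • y - A (x - s • y)) := ht s
    _ ≤ p (x - s • y - w) := hmin _ w hw
    _ = p (x - (s • y + w)) := by rw [sub_add_eq_sub_sub]

theorem of_fg (hsc : SphericallyComplete v) (hp : IsUltrametricSeminorm v p)
    {F : Submodule K E} (hF : F.FG) : IsProximinal p F := by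
  classical
  obtain ⟨s, rfl⟩ := hF
  induction s using Finset.induction_on with
  | empty => simpa using bot
  | insert x s _ ih =>
    rw [Finset.coe_insert, span_insert]
    exact ih.sup_span_singleton hsc hp x

end IsProximinal

variable (K) in
def IsOrthogonalFamily {ι : Type*} [Fintype ι] (p : E → ℝ) (e : ι → E) : Prop :=
  ∀ (s : ι → K) (i : ι), p (s i • e i) ≤ p (∑ k, s k • e k)

namespace IsOrthogonalFamily

variable {p : E → ℝ}

theorem map_sum_eq_iSup (hp : IsUltrametricSeminorm v p) {ι : Type*} [Fintype ι] {e : ι → E}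
    (he : IsOrthogonalFamily K p e) (s : ι → K) :
    p (∑ i, s i • e i) = ⨆ i, p (s i • e i) :=
  le_antisymm
    (hp.map_sum_le _ _ (Real.iSup_nonneg fun _ => hp.nonneg _)
      fun i _ => le_ciSup (f := fun i => p (s i • e i)) (finite_range _).bddAbove i)
    (Real.iSup_le (he s) (hp.nonneg _))

theorem cons (hp : IsUltrametricSeminorm v p) {n : ℕ} {e : Fin n → E}
    (he : IsOrthogonalFamily K p e) {y : E}
    (hy : ∀ (c : K), ∀ w ∈ span K (range e), p (c • y) ≤ p (c • y + w)) :
    IsOrthogonalFamily K p (Fin.cons y e : Fin (n + 1) → E) := by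
  intro s i
  set w := ∑ k, s k.succ • e k
  have hw : w ∈ span K (range e) :=
    sum_mem fun k _ => smul_mem _ _ (subset_span (mem_range_self k))
  have hsum : ∑ k, s k • (Fin.cons y e : Fin (n + 1) → E) k = s 0 • y + w := by
    simp [Fin.sum_univ_succ, w]
  have hwle : p w ≤ p (s 0 • y + w) := calc
    p w = p (s 0 • y + w - s 0 • y) := by rw [add_sub_cancel_left]
    _ ≤ _ := (hp.map_sub_le_max _ _).trans (max_le le_rfl (hy _ w hw))
  rw [hsum]
  cases i using Fin.cases with
  | zero => simpa using hy _ w hw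
  | succ k => simpa using (he (fun k => s k.succ) k).trans hwle

end IsOrthogonalFamily

theorem exists_orthogonalFamily_of_fg (hsc : SphericallyComplete v) {p : E → ℝ}
    (hp : IsUltrametricSeminorm v p) {F : Submodule K E} (hF : F.FG) :
    ∃ (n : ℕ) (e : Fin n → E),
      LinearIndependent K e ∧ span K (range e) = F ∧ IsOrthogonalFamily K p e := by
  classical
  obtain ⟨s, rfl⟩ := hF
  induction s using Finset.induction_on with
  | empty => exact ⟨0, Fin.elim0, linearIndependent_empty_type, by simp, fun _ i => i.elim0⟩
  | insert x s _ ih =>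
    obtain ⟨n, e, hli, hspan, horth⟩ := ih
    rw [Finset.coe_insert, span_insert]
    by_cases hx : x ∈ span K s
    · exact ⟨n, e, hli, by rw [hspan, sup_eq_right.mpr ((span_singleton_le_iff_mem _ _).mpr hx)],
        horth⟩
    obtain ⟨a, ha, hmin⟩ := IsProximinal.of_fg hsc hp ⟨s, rfl⟩ x
    refine ⟨n + 1, Fin.cons (x - a) e, hli.finCons ?_, ?_, horth.cons hp ?_⟩
    · rw [hspan]
      exact fun h => hx (by simpa only [sub_add_cancel] using add_mem h ha)
    · rw [Fin.range_cons, span_insert, hspan, span_singleton_sub_sup ha]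
    · rw [hspan]
      exact fun c w hw => hp.le_smul_add_of_nearest ha hmin c hw

end

theorem exists_orthogonal_basis_general (K : Type u) [Field K]
    (v : AbsoluteValue K ℝ)
    (hsc : SphericallyComplete v)
    (E : Type w) [AddCommGroup E] [Module K E] [FiniteDimensional K E] (p : E → ℝ)
    (hp_smul : ∀ (c : K) (x : E), p (c • x) = v c * p x)
    (hp_ultra : ∀ x y : E, p (x + y) ≤ max (p x) (p y)) :
    ∃ (n : ℕ) (b : Module.Basis (Fin n) K E),
      ∀ s : Fin n → K, p (∑ i, s i • b i) = ⨆ i, p (s i • b i) := by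
  have hp : IsUltrametricSeminorm v p := ⟨hp_smul, hp_ultra⟩
  obtain ⟨n, e, hli, hspan, horth⟩ :=
    exists_orthogonalFamily_of_fg hsc hp (Module.Finite.fg_top (R := K) (M := E))
  refine ⟨n, Module.Basis.mk hli hspan.ge, fun s => ?_⟩
  simp only [Module.Basis.mk_apply]
  exact horth.map_sum_eq_iSup hp s

/-- Let `(K, v)` be a spherically complete nonarchimedean valued field.
Then every finite-dimensional `K`-vector space `E` equipped with an ultrametric vector
seminorm `p` admits a `p`-orthogonal basis: a basis `(e 1, …, e n)` such that for all
scalars `s 1, …, s n`, `p (∑ i, s i • e i) = max_i p (s i • e i)` (the maximum being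
expressed as a supremum over `Fin n`). -/
theorem exists_orthogonal_basis (K : Type u) [Field K]
    (v : AbsoluteValue K ℝ)
    (hna : ∀ x y : K, v (x + y) ≤ max (v x) (v y))
    (hsc : SphericallyComplete v)
    (E : Type w) [AddCommGroup E] [Module K E] [FiniteDimensional K E] (p : E → ℝ)
    (hp_smul : ∀ (c : K) (x : E), p (c • x) = v c * p x)
    (hp_ultra : ∀ x y : E, p (x + y) ≤ max (p x) (p y)) :
    ∃ (n : ℕ) (b : Module.Basis (Fin n) K E),
      ∀ s : Fin n → K, p (∑ i, s i • b i) = ⨆ i, p (s i • b i) :=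
  exists_orthogonal_basis_general K v hsc E p hp_smul hp_ultra
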